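/- Let A be an n×n real matrix and B an n×m real matrix with rank(B) = n, let s be an integer with s ≥ max{1, n − rank(A)}, and let K be an integer with K ≥ ⌈n/s⌉. Then for every x_0, x_f ∈ ℝⁿ there exist input vectors u(0), …, u(K−1) ∈ ℝ^m, each having at most s nonzero entries, such that the state sequence defined by x(0) = x_0 and x(k+1) = A x(k) + B u(k) for k = 0, …, K−1 satisfies x(K) = x_f. -/

import Mathlib

/-!
Write `x K = A ^ K x₀ + ∑ k, A ^ k B w k` with `w k = u (K - 1 - k)`; it suffices that every
vector of `ℝⁿ` is such a sum with `s`-sparse `w k`. Going down from the highest power, build a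
subspace of sums `∑_{k ≥ k₀} A ^ k B w k` of dimension at least `min (rank A ^ k₀) ((K - k₀) s)`:
at step `k₀` greedily add at most `s` columns of `A ^ k₀ B`, which span the range of `A ^ k₀`
since `B` is onto, and `rank A ^ k₀ ≤ rank A ^ (k₀ + 1) + dim ker A ≤ rank A ^ (k₀ + 1) + s`.
At `k₀ = 0` the dimension is `min n (K s) = n`.
-/

open Module Submodule LinearMap

section Rank

variable {𝕜 E F ι : Type*} [DivisionRing 𝕜] [AddCommGroup E] [Module 𝕜 E] [AddCommGroup F]
  [Module 𝕜 F] [FiniteDimensional 𝕜 E]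

theorem Submodule.finrank_le_finrank_map_add_finrank_ker (f : E →ₗ[𝕜] F) (W : Submodule 𝕜 E) :
    finrank 𝕜 W ≤ finrank 𝕜 (W.map f) + finrank 𝕜 (ker f) := by
  have hker : finrank 𝕜 (ker (f.domRestrict W)) ≤ finrank 𝕜 (ker f) := by
    rw [ker_domRestrict, ← finrank_map_subtype_eq]
    exact finrank_mono (map_comap_le _ _)
  have := (f.domRestrict W).finrank_range_add_finrank_ker
  rw [range_domRestrict] at this
  omega

theorem LinearMap.finrank_range_pow_le_finrank_range_pow_succ_add (f : Module.End 𝕜 E) (k : ℕ) :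
    finrank 𝕜 (range (f ^ k)) ≤ finrank 𝕜 (range (f ^ (k + 1))) + finrank 𝕜 (ker f) := by
  rw [pow_succ', Module.End.mul_eq_comp, range_comp]
  exact finrank_le_finrank_map_add_finrank_ker f _

theorem Submodule.exists_finset_min_le_finrank_sup_span (V : Submodule 𝕜 E) (g : ι → E) (c : ℕ) :
    ∃ I : Finset ι, I.card ≤ c ∧
      min (finrank 𝕜 ↥(V ⊔ span 𝕜 (Set.range g))) (finrank 𝕜 V + c) ≤
        finrank 𝕜 ↥(V ⊔ span 𝕜 (g '' I)) := by
  classical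
  induction c with
  | zero => exact ⟨∅, le_rfl, (min_le_right _ _).trans (finrank_mono le_sup_left)⟩
  | succ c ih =>
    obtain ⟨I, hIc, hI⟩ := ih
    by_cases hspan : Set.range g ⊆ (V ⊔ span 𝕜 (g '' I) : Submodule 𝕜 E)
    · refine ⟨I, by omega, min_le_left _ _ |>.trans (finrank_mono ?_)⟩
      exact sup_le le_sup_left (span_le.2 hspan)
    · obtain ⟨_, ⟨j, rfl⟩, hj⟩ := Set.not_subset.1 hspan
      have hlt : V ⊔ span 𝕜 (g '' I) < V ⊔ span 𝕜 (g '' ↑(insert j I)) := by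
        refine SetLike.lt_iff_le_and_exists.2 ⟨?_, g j, ?_, hj⟩
        · gcongr; simp
        · exact mem_sup_right (subset_span ⟨j, by simp, rfl⟩)
      have hle : V ⊔ span 𝕜 (g '' ↑(insert j I)) ≤ V ⊔ span 𝕜 (Set.range g) := by
        gcongr; exact Set.image_subset_range _ _
      have := finrank_lt_finrank_of_lt hlt
      have := finrank_mono hle
      exact ⟨insert j I, (Finset.card_insert_le j I).trans (by omega), by omega⟩

end Rank

section Sparse

variable {R M ι : Type*} [Semiring R] [AddCommMonoid M] [Module R M] [Fintype ι] [DecidableEq ι]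

def IsSparse [DecidableEq R] (s : ℕ) (u : ι → R) : Prop :=
  (Finset.univ.filter fun j => u j ≠ 0).card ≤ s

theorem Fintype.linearCombination_map_single_one (φ : (ι → R) →ₗ[R] M) :
    Fintype.linearCombination R (fun j => φ (Pi.single j 1)) = φ := by
  ext j
  simp

theorem exists_isSparse_apply_eq_of_mem_span [DecidableEq R] (φ : (ι → R) →ₗ[R] M)
    {I : Finset ι} {v : M} (hv : v ∈ span R ((fun j => φ (Pi.single j 1)) '' I)) :
    ∃ u, IsSparse I.card u ∧ φ u = v := by
  obtain ⟨c, rfl⟩ := (mem_span_image_finset_iff_exists_fun' R).1 hv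
  refine ⟨fun j => if j ∈ I then c j else 0, Finset.card_le_card fun j hj => ?_, ?_⟩
  · by_contra hjI
    simp [hjI] at hj
  · conv_lhs => rw [← Fintype.linearCombination_map_single_one φ, Fintype.linearCombination_apply]
    simp only [ite_smul, zero_smul, Finset.sum_ite_mem, Finset.univ_inter]

end Sparse

section ForcedOrbit

variable {R M : Type*} [Semiring R] [AddCommMonoid M] [Module R M]

def forcedOrbit (f : Module.End R M) (x₀ : M) (y : ℕ → M) (k : ℕ) : M :=
  (f ^ k) x₀ + ∑ i ∈ Finset.range k, (f ^ i) (y (k - 1 - i))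

theorem forcedOrbit_zero (f : Module.End R M) (x₀ : M) (y : ℕ → M) :
    forcedOrbit f x₀ y 0 = x₀ := by
  simp [forcedOrbit]

theorem forcedOrbit_succ (f : Module.End R M) (x₀ : M) (y : ℕ → M) (k : ℕ) :
    forcedOrbit f x₀ y (k + 1) = f (forcedOrbit f x₀ y k) + y k := by
  simp only [forcedOrbit, Finset.sum_range_succ', pow_succ', Module.End.mul_apply, map_add,
    map_sum, Nat.sub_sub, Nat.add_comm 1, Nat.add_sub_cancel, pow_zero, Module.End.one_apply]
  abel

end ForcedOrbit

section SparseControl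

variable {𝕜 E ι : Type*} [DivisionRing 𝕜] [DecidableEq 𝕜] [AddCommGroup E] [Module 𝕜 E]
  [FiniteDimensional 𝕜 E] [Fintype ι] [DecidableEq ι]

theorem exists_submodule_of_sparse_sums (f : Module.End 𝕜 E) {b : (ι → 𝕜) →ₗ[𝕜] E}
    (hb : range b = ⊤) {s : ℕ} (hs : finrank 𝕜 (ker f) ≤ s) (L k₀ : ℕ) :
    ∃ V : Submodule 𝕜 E, min (finrank 𝕜 (range (f ^ k₀))) (L * s) ≤ finrank 𝕜 V ∧
      ∀ v ∈ V, ∃ w : Fin L → ι → 𝕜, (∀ i, IsSparse s (w i)) ∧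
        ∑ i : Fin L, (f ^ (k₀ + i)) (b (w i)) = v := by
  induction L generalizing k₀ with
  | zero =>
    refine ⟨⊥, by simp, fun v hv => ⟨Fin.elim0, Fin.rec0, ?_⟩⟩
    simpa [eq_comm] using hv
  | succ L ih =>
    obtain ⟨V, hV, hVsums⟩ := ih (k₀ + 1)
    set φ := (f ^ k₀) ∘ₗ b
    obtain ⟨I, hIs, hI⟩ := V.exists_finset_min_le_finrank_sup_span (fun j => φ (Pi.single j 1)) s
    have hrange : span 𝕜 (Set.range fun j => φ (Pi.single j 1)) = range (f ^ k₀) := by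
      rw [← Fintype.range_linearCombination, Fintype.linearCombination_map_single_one,
        range_comp, hb, Submodule.map_top]
    refine ⟨V ⊔ span 𝕜 ((fun j => φ (Pi.single j 1)) '' I), ?_, fun v hv => ?_⟩
    · have := f.finrank_range_pow_le_finrank_range_pow_succ_add k₀
      have := finrank_mono (le_sup_right : range (f ^ k₀) ≤ V ⊔ range (f ^ k₀))
      rw [hrange] at hI
      rw [Nat.succ_mul]
      omega
    · obtain ⟨v₁, hv₁, v₂, hv₂, rfl⟩ := mem_sup.1 hv
      obtain ⟨w, hw, rfl⟩ := hVsums v₁ hv₁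
      obtain ⟨u, hu, rfl⟩ := exists_isSparse_apply_eq_of_mem_span φ hv₂
      refine ⟨Fin.cons u w, Fin.forall_fin_succ.2 ⟨hu.trans hIs, hw⟩, ?_⟩
      simp [Fin.sum_univ_succ, φ, add_comm, add_left_comm]

theorem exists_sparse_control (f : Module.End 𝕜 E) {b : (ι → 𝕜) →ₗ[𝕜] E} (hb : range b = ⊤)
    {s K : ℕ} (hs : finrank 𝕜 (ker f) ≤ s) (hK : finrank 𝕜 E ≤ K * s) (x₀ xf : E) :
    ∃ u : Fin K → ι → 𝕜, (∀ k, IsSparse s (u k)) ∧ ∃ x : ℕ → E, x 0 = x₀ ∧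
      (∀ k : Fin K, x (k + 1) = f (x k) + b (u k)) ∧ x K = xf := by
  obtain ⟨V, hV, hVsums⟩ := exists_submodule_of_sparse_sums f hb hs K 0
  have hVtop : V = ⊤ := by
    rw [pow_zero, Module.End.one_eq_id, range_id, finrank_top, min_eq_left hK] at hV
    exact eq_top_of_finrank_eq (le_antisymm V.finrank_le hV)
  obtain ⟨w, hw, hsum⟩ := hVsums (xf - (f ^ K) x₀) (hVtop ▸ mem_top)
  simp only [zero_add] at hsum
  let y : ℕ → E := fun j => if h : j < K then b (w (Fin.rev ⟨j, h⟩)) else 0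
  have hy : ∀ i : Fin K, y (K - 1 - i) = b (w i) := by
    intro i
    have hi : K - 1 - (i : ℕ) < K := by omega
    simp only [y, dif_pos hi]
    congr 2
    ext
    simp only [Fin.val_rev]
    omega
  refine ⟨fun k => w k.rev, fun k => hw _, forcedOrbit f x₀ y, forcedOrbit_zero f x₀ y,
    fun k => by simp [forcedOrbit_succ, y], ?_⟩
  rw [forcedOrbit, Finset.sum_range, Finset.sum_congr rfl fun i _ => congrArg _ (hy i), hsum,
    add_sub_cancel]

end SparseControl

/-- If `rank B = n`, `s ≥ max {1, n - rank A}`, and `K ≥ ⌈n/s⌉`, then for every pair of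
states `x₀, x_f ∈ ℝⁿ` there exist `s`-sparse inputs `u(0), ..., u(K-1)` driving the system
`x(k+1) = A x(k) + B u(k)` from `x(0) = x₀` to `x(K) = x_f`. -/
theorem stmt_2 {n m : ℕ} (A : Matrix (Fin n) (Fin n) ℝ) (B : Matrix (Fin n) (Fin m) ℝ)
    (hB : B.rank = n) (s K : ℕ) (hs : max 1 (n - A.rank) ≤ s)
    (hK : (⌈(n : ℚ) / (s : ℚ)⌉ : ℤ) ≤ (K : ℤ)) :
    ∀ x₀ xf : Fin n → ℝ, ∃ u : Fin K → Fin m → ℝ,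
      (∀ k : Fin K, (Finset.univ.filter fun j : Fin m => u k j ≠ 0).card ≤ s) ∧
      ∃ x : ℕ → Fin n → ℝ, x 0 = x₀ ∧
        (∀ k : Fin K, x ((k : ℕ) + 1) = A.mulVec (x k) + B.mulVec (u k)) ∧
        x K = xf := by
  obtain ⟨hs_one, hs_corank⟩ := max_le_iff.1 hs
  have hker : finrank ℝ (ker A.mulVecLin) ≤ s := by
    have := A.mulVecLin.finrank_range_add_finrank_ker
    rw [finrank_fin_fun] at this
    unfold Matrix.rank at hs_corank
    omega
  have hBrange : range B.mulVecLin = ⊤ :=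
    eq_top_of_finrank_eq (by rw [finrank_fin_fun]; exact hB)
  have hKs : finrank ℝ (Fin n → ℝ) ≤ K * s := by
    have : (n : ℚ) / s ≤ K := by exact_mod_cast Int.ceil_le.1 hK
    rw [div_le_iff₀ (by exact_mod_cast hs_one)] at this
    rw [finrank_fin_fun]
    exact_mod_cast this
  exact exists_sparse_control A.mulVecLin hBrange hker hKs
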